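/- Let F be a field of characteristic zero and fix a monomial ordering ≺ on the monomials in d variables. Let θ_1,...,θ_m ∈ F^d be pairwise distinct points, and for each i let P_{i1},...,P_{is_i} ∈ F[x_1,...,x_d] be linearly independent polynomials; consider the interpolation conditions Δ consisting of the functionals g ↦ (P_{ij}(D)g)(θ_i), i = 1,...,m, j = 1,...,s_i (n = s_1 + ... + s_m conditions in total). Suppose {q_{ij} : i = 1,...,m, j = 1,...,s_i} ⊂ F[[x_1,...,x_d]] is a "reverse" reduced basis of the power series {e^{θ_i·X}·P_{ij} : i = 1,...,m, j = 1,...,s_i} (i.e., the q_{ij} are linearly independent, each q_{ij} lies in the span of the e^{θ_k·X}·P_{kl}, they span the same subspace, and under a fixed linear enumeration the ≺-least monomial of each earlier element does not occur in any later element). Then {lm(q_{ij}) : i = 1,...,m, j = 1,...,s_i} is the ≺-minimal monomial interpolating basis for Δ. -/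

import Mathlib

/-!
The conditions are read through the apolar pairing `⟨f, g⟩ = Σ_δ δ! f_δ g_δ` of power series
with polynomials: `(P(D) g)(θ) = ⟨e^{θ·X} P, g⟩`, so `Δ` consists of the pairings with the
series `e^{θ_i·X} P_{ij}`, whose span contains the `q_k`. Pairing a polynomial supported on the
`β_k = lm(q_k)` with `q_1, …, q_n` gives a triangular system with nonzero diagonal, so the `β_k`
form an interpolating basis. If `T' ≺ T` and `b = max (T − T')`, then the `q_k` with `b ⪯ β_k`
outnumber the elements of `T'` above `b`, so a nonzero combination `h` of them has no monomial
of `T'`. Such an `h` pairs to zero with every polynomial supported on `T'`, whereas an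
interpolating `T'` supplies, for each nonzero combination of the `e^{θ_i·X} P_{ij}`, a
polynomial on which the pairing does not vanish.
-/

open MvPolynomial

/-- The iterated partial derivative operator `D^α = ∂^{α_1}_{x_1} ⋯ ∂^{α_d}_{x_d}`. -/
noncomputable def Dmon (F : Type*) [CommSemiring F] {d : ℕ} (α : Fin d →₀ ℕ) :
    Module.End F (MvPolynomial (Fin d) F) :=
  ((List.finRange d).map fun i =>
    ((pderiv i : Derivation F (MvPolynomial (Fin d) F) (MvPolynomial (Fin d) F)) :
      MvPolynomial (Fin d) F →ₗ[F] MvPolynomial (Fin d) F) ^ (α i)).prod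

/-- The differential operator `P(D) = Σ_α P̂(α) D^α` induced by a polynomial `P`. -/
noncomputable def PD {F : Type*} [Field F] {d : ℕ} (P : MvPolynomial (Fin d) F) :
    Module.End F (MvPolynomial (Fin d) F) :=
  ∑ α ∈ P.support, P.coeff α • Dmon F α

/-- The linear functional `δ₀ ∘ P(D) : g ↦ (P(D) g)(0)`. -/
noncomputable def delta0PD {F : Type*} [Field F] {d : ℕ} (P : MvPolynomial (Fin d) F) :
    MvPolynomial (Fin d) F →ₗ[F] F :=
  (MvPolynomial.aeval (0 : Fin d → F)).toLinearMap ∘ₗ PD P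

/-- `prec` is a monomial ordering: a linear well-ordering of the monomials (identified with
their exponent vectors) that is compatible with multiplication of monomials. -/
structure IsMonomialOrder {d : ℕ} (prec : (Fin d →₀ ℕ) → (Fin d →₀ ℕ) → Prop) : Prop where
  irrefl : ∀ a, ¬ prec a a
  trans : ∀ a b c, prec a b → prec b c → prec a c
  total : ∀ a b, a ≠ b → prec a b ∨ prec b a
  wf : WellFounded prec
  add_compat : ∀ a b c, prec a b → prec (a + c) (b + c)

/-- `m` is the `prec`-least monomial occurring in `P` with nonzero coefficient,
i.e. `X^m = lm(P)`. -/
def IsLeastMon {F : Type*} [Field F] {d : ℕ} (prec : (Fin d →₀ ℕ) → (Fin d →₀ ℕ) → Prop)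
    (P : MvPolynomial (Fin d) F) (m : Fin d →₀ ℕ) : Prop :=
  m ∈ P.support ∧ ∀ m' ∈ P.support, m' ≠ m → prec m m'

/-- `{P_1, ..., P_n}` is a "reverse" reduced basis w.r.t. `prec`: the `P_i` are linearly
independent and `lm(P_i) ∉ Λ{P_j}` for all `i < j`. -/
def IsRevReducedBasis {F : Type*} [Field F] {d n : ℕ}
    (prec : (Fin d →₀ ℕ) → (Fin d →₀ ℕ) → Prop) (P : Fin n → MvPolynomial (Fin d) F) : Prop :=
  LinearIndependent F P ∧
    ∀ i j : Fin n, i < j → ∀ m, IsLeastMon prec (P i) m → m ∉ (P j).support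

/-- The finset of exponent vectors `T` is a monomial interpolating basis for the `n`
interpolation conditions `lam`: `T` has `n` (distinct) elements and for every vector of
values `f` there is a unique `g` in the span of the monomials `X^m`, `m ∈ T`, with
`lam i g = f i` for all `i`. -/
def IsMonIntBasisSet {F : Type*} [Field F] {d n : ℕ}
    (lam : Fin n → (MvPolynomial (Fin d) F →ₗ[F] F)) (T : Finset (Fin d →₀ ℕ)) : Prop :=
  T.card = n ∧ ∀ f : Fin n → F, ∃! g : MvPolynomial (Fin d) F,
    g ∈ Submodule.span F ((fun m => (monomial m (1 : F) : MvPolynomial (Fin d) F)) ''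
        (T : Set (Fin d →₀ ℕ))) ∧ ∀ i, lam i g = f i

/-- `m` is the `prec`-greatest element of the finset `S`. -/
def IsMaxOf {d : ℕ} (prec : (Fin d →₀ ℕ) → (Fin d →₀ ℕ) → Prop)
    (S : Finset (Fin d →₀ ℕ)) (m : Fin d →₀ ℕ) : Prop :=
  m ∈ S ∧ ∀ m' ∈ S, m' ≠ m → prec m' m

/-- `T' ≺ T` for two finsets of monomials with `T − T' ≠ ∅` and `T' − T ≠ ∅`:
`max_≺ (T' − T) ≺ max_≺ (T − T')`. -/
def SetPrec {d : ℕ} (prec : (Fin d →₀ ℕ) → (Fin d →₀ ℕ) → Prop)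
    (T' T : Finset (Fin d →₀ ℕ)) : Prop :=
  ∃ a b, IsMaxOf prec (T' \ T) a ∧ IsMaxOf prec (T \ T') b ∧ prec a b

/-- The formal power series `e^{θ·X} = Σ_{j=0}^∞ (θ·X)^j/j! = Σ_α (θ^α/α!) X^α`. -/
noncomputable def expThetaX {F : Type*} [Field F] {d : ℕ} (θ : Fin d → F) :
    MvPowerSeries (Fin d) F :=
  fun α : Fin d →₀ ℕ =>
    (∏ i : Fin d, θ i ^ α i) / ((∏ i : Fin d, ((α i).factorial) : ℕ) : F)

/-- `m` is the `prec`-least monomial occurring with nonzero coefficient in the formal power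
series `q`, i.e. `X^m = lm(q)`. -/
def IsLeastMonPS {F : Type*} [Field F] {d : ℕ}
    (prec : (Fin d →₀ ℕ) → (Fin d →₀ ℕ) → Prop)
    (q : MvPowerSeries (Fin d) F) (m : Fin d →₀ ℕ) : Prop :=
  MvPowerSeries.coeff m q ≠ 0 ∧
    ∀ m', MvPowerSeries.coeff m' q ≠ 0 → m' ≠ m → prec m m'

section Apolar

variable {F : Type*} [Field F] {d : ℕ}

noncomputable def multiFactorial (δ : Fin d →₀ ℕ) : F := ((∏ i, (δ i).factorial : ℕ) : F)

lemma multiFactorial_ne_zero [CharZero F] (δ : Fin d →₀ ℕ) : (multiFactorial δ : F) ≠ 0 :=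
  Nat.cast_ne_zero.mpr <| Finset.prod_ne_zero_iff.mpr fun _ _ => (Nat.factorial_pos _).ne'

lemma multiFactorial_eq_mul_descFactorial {α γ : Fin d →₀ ℕ} (h : α ≤ γ) :
    (multiFactorial γ : F) =
      multiFactorial (γ - α) * ((∏ i, (γ i).descFactorial (α i) : ℕ) : F) := by
  rw [multiFactorial, multiFactorial, ← Nat.cast_mul, ← Finset.prod_mul_distrib]
  congr 1
  refine Finset.prod_congr rfl fun i _ => ?_
  rw [Finsupp.tsub_apply, Nat.factorial_mul_descFactorial (h i)]

/-- The apolar pairing `⟨f, g⟩ = Σ_δ δ! f_δ g_δ` of a power series `f` with a polynomial `g`. -/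
noncomputable def apolar : MvPowerSeries (Fin d) F →ₗ[F] MvPolynomial (Fin d) F →ₗ[F] F :=
  ((basisMonomials (Fin d) F).constr F).toLinearMap ∘ₗ
    LinearMap.pi fun δ => (multiFactorial δ : F) • MvPowerSeries.coeff δ

lemma apolar_apply (f : MvPowerSeries (Fin d) F) (g : MvPolynomial (Fin d) F) :
    apolar f g = ∑ δ ∈ g.support, g.coeff δ * (multiFactorial δ * MvPowerSeries.coeff δ f) := by
  rw [apolar, LinearMap.comp_apply, LinearEquiv.coe_coe, Module.Basis.constr_apply]
  rfl

lemma apolar_monomial (f : MvPowerSeries (Fin d) F) (δ : Fin d →₀ ℕ) (c : F) :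
    apolar f (monomial δ c) = c * (multiFactorial δ * MvPowerSeries.coeff δ f) := by
  classical
  rw [apolar_apply, support_monomial]
  split_ifs with hc <;> simp [hc]

lemma apolar_eq_zero_of_coeff_eq_zero {f : MvPowerSeries (Fin d) F} {g : MvPolynomial (Fin d) F}
    (h : ∀ δ ∈ g.support, MvPowerSeries.coeff δ f = 0) : apolar f g = 0 := by
  rw [apolar_apply]
  exact Finset.sum_eq_zero fun δ hδ => by rw [h δ hδ, mul_zero, mul_zero]

lemma apolar_eq_zero_of_mem_span {ι : Type*} {v : ι → MvPowerSeries (Fin d) F}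
    {f : MvPowerSeries (Fin d) F} (hf : f ∈ Submodule.span F (Set.range v))
    {g : MvPolynomial (Fin d) F} (hg : ∀ i, apolar (v i) g = 0) : apolar f g = 0 :=
  Submodule.span_le (p := LinearMap.ker (apolar.flip g)).mpr
    (Set.range_subset_iff.mpr hg) hf

end Apolar

section Derivatives

variable {R σ : Type*} [CommSemiring R]

lemma pderiv_pow_monomial (i : σ) (k : ℕ) (γ : σ →₀ ℕ) (c : R) :
    (((pderiv i : Derivation R (MvPolynomial σ R) (MvPolynomial σ R)) :
        MvPolynomial σ R →ₗ[R] MvPolynomial σ R) ^ k) (monomial γ c) =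
      monomial (γ - Finsupp.single i k) (c * ((γ i).descFactorial k : ℕ)) := by
  induction k with
  | zero => simp
  | succ k ih =>
    rw [pow_succ', Module.End.mul_apply, ih, Derivation.coeFn_coe, pderiv_monomial,
      Finsupp.tsub_apply, Finsupp.single_eq_same, tsub_tsub, ← Finsupp.single_add,
      Nat.descFactorial_succ]
    push_cast
    ring_nf

lemma list_prod_pderiv_pow_monomial (α γ : σ →₀ ℕ) (c : R) {l : List σ} (hl : l.Nodup) :
    (l.map fun i => ((pderiv i : Derivation R (MvPolynomial σ R) (MvPolynomial σ R)) :
        MvPolynomial σ R →ₗ[R] MvPolynomial σ R) ^ α i).prod (monomial γ c) =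
      monomial (γ - (l.map fun i => Finsupp.single i (α i)).sum)
        (c * ((l.map fun i => (γ i).descFactorial (α i)).prod : ℕ)) := by
  induction l with
  | nil => simp
  | cons i l ih =>
    obtain ⟨hil, hl⟩ := List.nodup_cons.mp hl
    have hsum : (l.map fun j => Finsupp.single j (α j)).sum i = 0 := by
      rw [← Finsupp.applyAddHom_apply, map_list_sum, List.map_map]
      refine List.sum_eq_zero fun x hx => ?_
      obtain ⟨j, hj, rfl⟩ := List.mem_map.mp hx
      exact Finsupp.single_eq_of_ne (by rintro rfl; exact hil hj)
    have hγi : (γ - (l.map fun j => Finsupp.single j (α j)).sum) i = γ i := by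
      rw [Finsupp.tsub_apply, hsum, Nat.sub_zero]
    rw [List.map_cons, List.prod_cons, Module.End.mul_apply, ih hl, pderiv_pow_monomial, hγi,
      tsub_tsub, List.map_cons, List.sum_cons, add_comm, List.map_cons, List.prod_cons]
    push_cast
    ring_nf

lemma Dmon_monomial {F : Type*} [CommSemiring F] {d : ℕ} (α γ : Fin d →₀ ℕ) (c : F) :
    Dmon F α (monomial γ c) =
      monomial (γ - α) (c * ((∏ i, (γ i).descFactorial (α i) : ℕ) : F)) := by
  rw [Dmon, list_prod_pderiv_pow_monomial α γ c (List.nodup_finRange d), ← Fin.sum_univ_def,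
    ← Fin.prod_univ_def, Finsupp.univ_sum_single]

end Derivatives

section KeyIdentity

variable {F : Type*} [Field F] [CharZero F] {d : ℕ}

lemma aeval_Dmon_monomial_eq_apolar (θ : Fin d → F) (α γ : Fin d →₀ ℕ) :
    aeval θ (Dmon F α (monomial γ 1)) =
      apolar (expThetaX θ * MvPowerSeries.monomial α 1) (monomial γ 1) := by
  rw [Dmon_monomial, aeval_monomial, apolar_monomial, MvPowerSeries.coeff_mul_monomial]
  split_ifs with hαγ
  · rw [multiFactorial_eq_mul_descFactorial hαγ, MvPowerSeries.coeff_apply, expThetaX,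
      Finsupp.prod_pow]
    have := multiFactorial_ne_zero (F := F) (γ - α)
    simp only [Algebra.algebraMap_self, RingHom.id_apply, multiFactorial] at this ⊢
    field_simp
  · obtain ⟨i, hi⟩ : ∃ i, γ i < α i := by
      simpa [Finsupp.le_def] using hαγ
    rw [Finset.prod_eq_zero (Finset.mem_univ i) (Nat.descFactorial_eq_zero_iff_lt.mpr hi)]
    simp

lemma aeval_comp_PD_eq_apolar (θ : Fin d → F) (P : MvPolynomial (Fin d) F) :
    (aeval θ).toLinearMap ∘ₗ PD P = apolar (expThetaX θ * (P : MvPowerSeries (Fin d) F)) := by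
  refine (basisMonomials (Fin d) F).ext fun γ => ?_
  have hP : (P : MvPowerSeries (Fin d) F) =
      ∑ α ∈ P.support, P.coeff α • MvPowerSeries.monomial α 1 := by
    ext δ
    simp [MvPowerSeries.coeff_monomial]
  simp only [coe_basisMonomials, LinearMap.comp_apply, PD, LinearMap.sum_apply,
    LinearMap.smul_apply, AlgHom.toLinearMap_apply, map_sum, map_smul, hP, Finset.mul_sum,
    mul_smul_comm]
  exact Finset.sum_congr rfl fun α _ => by rw [aeval_Dmon_monomial_eq_apolar]

end KeyIdentity

section Interpolation

variable {F : Type*} [Field F] {d n : ℕ}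

lemma isMonIntBasisSet_of_forall_eq_zero (lam : Fin n → (MvPolynomial (Fin d) F →ₗ[F] F))
    {T : Finset (Fin d →₀ ℕ)} (hcard : T.card = n)
    (h : ∀ g ∈ restrictSupport F (T : Set (Fin d →₀ ℕ)), (∀ i, lam i g = 0) → g = 0) :
    IsMonIntBasisSet lam T := by
  refine ⟨hcard, fun f => ?_⟩
  rw [← restrictSupport_eq_span]
  set W := restrictSupport F (T : Set (Fin d →₀ ℕ))
  let φ : W →ₗ[F] (Fin n → F) := LinearMap.pi fun i => lam i ∘ₗ W.subtype
  have hinj : Function.Injective φ := by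
    rw [← LinearMap.ker_eq_bot, Submodule.eq_bot_iff]
    rintro ⟨g, hg⟩ hφ
    exact Subtype.ext <| h g hg fun i => congrFun (LinearMap.mem_ker.mp hφ) i
  have : FiniteDimensional F W := .of_basis (basisRestrictSupport F _)
  have hrank : Module.finrank F W = Module.finrank F (Fin n → F) := by
    simp [W, Module.finrank_eq_card_basis (basisRestrictSupport F _), hcard]
  obtain ⟨⟨g, hg⟩, hgf⟩ := (LinearMap.injective_iff_surjective_of_finrank_eq_finrank hrank).mp
    hinj f
  refine ⟨g, ⟨hg, fun i => congrFun hgf i⟩, fun g' ⟨hg', hg'f⟩ => ?_⟩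
  have : φ ⟨g', hg'⟩ = φ ⟨g, hg⟩ := hgf ▸ funext hg'f
  exact congrArg Subtype.val (hinj this)

lemma injective_of_triangular {q : Fin n → MvPowerSeries (Fin d) F}
    {β : Fin n → (Fin d →₀ ℕ)} (hdiag : ∀ k, MvPowerSeries.coeff (β k) (q k) ≠ 0)
    (htri : ∀ k l, k < l → MvPowerSeries.coeff (β k) (q l) = 0) : Function.Injective β := by
  intro k l hkl
  by_contra hne
  rcases lt_or_gt_of_ne hne with h | h
  · exact hdiag l (hkl ▸ htri k l h)
  · exact hdiag k (hkl ▸ htri l k h)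

lemma eq_zero_of_forall_apolar_eq_zero [CharZero F] {q : Fin n → MvPowerSeries (Fin d) F}
    {β : Fin n → (Fin d →₀ ℕ)} (hdiag : ∀ k, MvPowerSeries.coeff (β k) (q k) ≠ 0)
    (htri : ∀ k l, k < l → MvPowerSeries.coeff (β k) (q l) = 0)
    {g : MvPolynomial (Fin d) F} (hg : ↑g.support ⊆ Set.range β)
    (hq : ∀ k, apolar (q k) g = 0) : g = 0 := by
  by_contra hg0
  obtain ⟨δ, hδ⟩ := support_nonempty.mpr hg0
  let K := Finset.univ.filter fun k => β k ∈ g.support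
  have hK : K.Nonempty := by
    obtain ⟨k, hk⟩ := hg hδ
    exact ⟨k, Finset.mem_filter.mpr ⟨Finset.mem_univ _, hk ▸ hδ⟩⟩
  set k := K.max' hK
  have hk : β k ∈ g.support := (Finset.mem_filter.mp (K.max'_mem hK)).2
  -- among the monomials of `g`, only `β k` is not killed by `q k`
  have hsum : apolar (q k) g =
      g.coeff (β k) * (multiFactorial (β k) * MvPowerSeries.coeff (β k) (q k)) := by
    rw [apolar_apply]
    refine Finset.sum_eq_single_of_mem _ hk fun δ hδ hne => ?_
    obtain ⟨l, rfl⟩ := hg hδ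
    have hlk : l < k := lt_of_le_of_ne (K.le_max' l (Finset.mem_filter.mpr ⟨Finset.mem_univ _, hδ⟩))
      (by rintro rfl; exact hne rfl)
    rw [htri l k hlk, mul_zero, mul_zero]
  rw [hq k] at hsum
  exact mul_ne_zero (mem_support_iff.mp hk) (mul_ne_zero (multiFactorial_ne_zero _) (hdiag k))
    hsum.symm

lemma isMonIntBasisSet_image_of_triangular [CharZero F] {f q : Fin n → MvPowerSeries (Fin d) F}
    (hq : ∀ k, q k ∈ Submodule.span F (Set.range f)) {β : Fin n → (Fin d →₀ ℕ)}
    (hdiag : ∀ k, MvPowerSeries.coeff (β k) (q k) ≠ 0)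
    (htri : ∀ k l, k < l → MvPowerSeries.coeff (β k) (q l) = 0) :
    IsMonIntBasisSet (fun k => apolar (f k)) (Finset.univ.image β) := by
  refine isMonIntBasisSet_of_forall_eq_zero _ ?_ fun g hg hf => ?_
  · rw [Finset.card_image_of_injective _ (injective_of_triangular hdiag htri), Finset.card_fin]
  · refine eq_zero_of_forall_apolar_eq_zero hdiag htri ?_ fun k =>
      apolar_eq_zero_of_mem_span (hq k) hf
    simpa [mem_restrictSupport_iff] using hg

lemma eq_zero_of_coeff_eq_zero_of_isMonIntBasisSet {f : Fin n → MvPowerSeries (Fin d) F}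
    {T : Finset (Fin d →₀ ℕ)} (hT : IsMonIntBasisSet (fun k => apolar (f k)) T)
    {h : MvPowerSeries (Fin d) F} (hf : h ∈ Submodule.span F (Set.range f))
    (hcoeff : ∀ γ ∈ T, MvPowerSeries.coeff γ h = 0) : h = 0 := by
  obtain ⟨u, rfl⟩ := (Submodule.mem_span_range_iff_exists_fun F).mp hf
  suffices ∀ k, u k = 0 by simp [this]
  intro k
  obtain ⟨g, ⟨hgT, hgf⟩, -⟩ := hT.2 (Pi.single k 1)
  rw [← restrictSupport_eq_span, mem_restrictSupport_iff] at hgT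
  calc u k = apolar (∑ l, u l • f l) g := by simp [hgf, Pi.single_apply]
    _ = 0 := apolar_eq_zero_of_coeff_eq_zero fun δ hδ => hcoeff δ (hgT hδ)

end Interpolation

section Minimality

variable {F : Type*} [Field F] {d n : ℕ}

lemma exists_ne_zero_mem_span_forall_eq_zero {ι κ M : Type*} [AddCommGroup M] [Module F M]
    {v : ι → M} (hv : LinearIndependent F v) (K : Finset ι) (S : Finset κ)
    (φ : κ → M →ₗ[F] F) (hcard : S.card < K.card) :
    ∃ h ∈ Submodule.span F (v '' K), h ≠ 0 ∧ ∀ γ ∈ S, φ γ h = 0 := by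
  let W := Submodule.span F (Set.range fun k : K => v k)
  have : FiniteDimensional F W := FiniteDimensional.span_of_finite F (Set.finite_range _)
  have hW : Module.finrank F W = K.card :=
    (finrank_span_eq_card (b := fun k : K => v k) (hv.comp _ Subtype.val_injective)).trans
      (Fintype.card_coe K)
  let ψ : W →ₗ[F] (S → F) := LinearMap.pi fun γ => φ γ ∘ₗ W.subtype
  obtain ⟨w, hw, hw0⟩ := (Submodule.ne_bot_iff _).mp
    (LinearMap.ker_ne_bot_of_finrank_lt (f := ψ) (by simpa [hW] using hcard))
  refine ⟨w, ?_, fun h => hw0 (Subtype.ext h), fun γ hγ =>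
    congrFun (LinearMap.mem_ker.mp hw) ⟨γ, hγ⟩⟩
  simp [Set.image_eq_range]

open Classical in
lemma card_filter_lt_card_filter_of_isMaxOf {prec : (Fin d →₀ ℕ) → (Fin d →₀ ℕ) → Prop}
    (hord : IsMonomialOrder prec) {T' : Finset (Fin d →₀ ℕ)} {β : Fin n → (Fin d →₀ ℕ)}
    {a b : Fin d →₀ ℕ} (ha : IsMaxOf prec (T' \ Finset.univ.image β) a)
    (hb : b ∈ Finset.univ.image β) (hab : prec a b) :
    (T'.filter (prec b)).card < (Finset.univ.filter fun k => β k = b ∨ prec b (β k)).card := by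
  obtain ⟨k₀, -, rfl⟩ := Finset.mem_image.mp hb
  set K := Finset.univ.filter fun k => β k = β k₀ ∨ prec (β k₀) (β k)
  refine lt_of_le_of_lt ?_ ((Finset.card_image_le (s := K.erase k₀) (f := β)).trans_lt
    (Finset.card_erase_lt_of_mem (by simp [K])))
  refine Finset.card_le_card fun γ hγ => ?_
  obtain ⟨hγT', hbγ⟩ := Finset.mem_filter.mp hγ
  -- every element of `T' \ T` is at most `a ≺ b`
  have hγT : γ ∈ Finset.univ.image β := by
    by_contra hγT
    have hγb : prec γ (β k₀) := by
      rcases eq_or_ne γ a with rfl | hγa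
      · exact hab
      · exact hord.trans _ _ _ (ha.2 γ (Finset.mem_sdiff.mpr ⟨hγT', hγT⟩) hγa) hab
    exact hord.irrefl _ (hord.trans _ _ _ hbγ hγb)
  obtain ⟨k, -, rfl⟩ := Finset.mem_image.mp hγT
  refine Finset.mem_image_of_mem β (Finset.mem_erase.mpr ⟨?_, by simp [K, hbγ]⟩)
  rintro rfl
  exact hord.irrefl _ hbγ

lemma exists_ne_zero_mem_span_coeff_eq_zero_of_setPrec
    {prec : (Fin d →₀ ℕ) → (Fin d →₀ ℕ) → Prop} (hord : IsMonomialOrder prec)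
    {q : Fin n → MvPowerSeries (Fin d) F} (hq : LinearIndependent F q)
    {β : Fin n → (Fin d →₀ ℕ)} (hβ : ∀ k, IsLeastMonPS prec (q k) (β k))
    {T' : Finset (Fin d →₀ ℕ)} (hT' : SetPrec prec T' (Finset.univ.image β)) :
    ∃ h ∈ Submodule.span F (Set.range q), h ≠ 0 ∧ ∀ γ ∈ T', MvPowerSeries.coeff γ h = 0 := by
  classical
  obtain ⟨a, b, ha, ⟨hb, -⟩, hab⟩ := hT'
  obtain ⟨hbT, hbT'⟩ := Finset.mem_sdiff.mp hb
  obtain ⟨h, hK, hne, hS⟩ := exists_ne_zero_mem_span_forall_eq_zero hq _ _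
    MvPowerSeries.coeff (card_filter_lt_card_filter_of_isMaxOf hord ha hbT hab)
  refine ⟨h, Submodule.span_mono (Set.image_subset_range _ _) hK, hne, fun γ hγ => ?_⟩
  by_cases hbγ : prec b γ
  · exact hS γ (Finset.mem_filter.mpr ⟨hγ, hbγ⟩)
  have hγb : γ ≠ b := fun h => hbT' (h ▸ hγ)
  -- `γ` lies strictly below `b`, hence below the least monomial of every `q k` used in `h`
  refine Submodule.span_le (p := LinearMap.ker (MvPowerSeries.coeff γ)).mpr ?_ hK
  rintro _ ⟨k, hk, rfl⟩
  rw [SetLike.mem_coe, LinearMap.mem_ker]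
  by_contra hne
  obtain hk | hk := (Finset.mem_filter.mp hk).2
  · rcases eq_or_ne γ (β k) with rfl | hγk
    · exact hγb hk
    · exact hbγ (hk ▸ (hβ k).2 γ hne hγk)
  · rcases eq_or_ne γ (β k) with rfl | hγk
    · exact hbγ hk
    · exact hbγ (hord.trans _ _ _ hk ((hβ k).2 γ hne hγk))

end Minimality

theorem mainTheorem_severalPoints_general {F : Type*} [Field F] [CharZero F] {d m n : ℕ}
    (prec : (Fin d →₀ ℕ) → (Fin d →₀ ℕ) → Prop) (hord : IsMonomialOrder prec)
    (θ : Fin m → (Fin d → F))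
    (s : Fin m → ℕ) (P : (i : Fin m) → Fin (s i) → MvPolynomial (Fin d) F)
    (e : Fin n ≃ (i : Fin m) × Fin (s i))
    (q : Fin n → MvPowerSeries (Fin d) F)
    (hq_li : LinearIndependent F q)
    (hq_span : Submodule.span F (Set.range q) =
      Submodule.span F (Set.range fun p : (i : Fin m) × Fin (s i) =>
        expThetaX (θ p.1) * ((P p.1 p.2 : MvPolynomial (Fin d) F) : MvPowerSeries (Fin d) F)))
    (hq_rev : ∀ k l : Fin n, k < l → ∀ mon : Fin d →₀ ℕ,
      IsLeastMonPS prec (q k) mon → MvPowerSeries.coeff mon (q l) = 0)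
    (β : Fin n → (Fin d →₀ ℕ)) (hβ : ∀ k, IsLeastMonPS prec (q k) (β k)) :
    IsMonIntBasisSet
        (fun k => ((MvPolynomial.aeval (θ (e k).1)).toLinearMap ∘ₗ PD (P (e k).1 (e k).2) :
          MvPolynomial (Fin d) F →ₗ[F] F))
        (Finset.image β Finset.univ) ∧
      ∀ T' : Finset (Fin d →₀ ℕ),
        IsMonIntBasisSet
          (fun k => ((MvPolynomial.aeval (θ (e k).1)).toLinearMap ∘ₗ PD (P (e k).1 (e k).2) :
            MvPolynomial (Fin d) F →ₗ[F] F)) T' →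
        ¬ SetPrec prec T' (Finset.image β Finset.univ) := by
  simp only [aeval_comp_PD_eq_apolar]
  have hqf : Submodule.span F (Set.range q) ≤ Submodule.span F (Set.range fun k =>
      expThetaX (θ (e k).1) * ((P (e k).1 (e k).2 : MvPolynomial (Fin d) F) :
        MvPowerSeries (Fin d) F)) := by
    rw [hq_span, ← e.surjective.range_comp]
    rfl
  refine ⟨isMonIntBasisSet_image_of_triangular (fun k => hqf (Submodule.subset_span ⟨k, rfl⟩))
    (fun k => (hβ k).1) (fun k l hkl => hq_rev k l hkl _ (hβ k)), fun T' hT' hprec => ?_⟩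
  obtain ⟨h, hq, hne, hcoeff⟩ :=
    exists_ne_zero_mem_span_coeff_eq_zero_of_setPrec hord hq_li hβ hprec
  exact hne (eq_zero_of_coeff_eq_zero_of_isMonIntBasisSet hT' (hqf hq) hcoeff)

/-- **Main theorem.** Let `θ_1, ..., θ_m` be pairwise distinct points and, for
each `i`, let `P_{i1}, ..., P_{is_i}` be linearly independent polynomials; consider the `n`
interpolation conditions `g ↦ (P_{ij}(D) g)(θ_i)` (enumerated by an equivalence
`e : Fin n ≃ Σ i, Fin (s i)`). If `q_1, ..., q_n` is a "reverse" reduced basis of the power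
series `e^{θ_i·X}·P_{ij}` (linearly independent, spanning the same subspace, and with
`lm(q_k) ∉ Λ{q_l}` for `k < l`), and `X^{β_k} = lm(q_k)`, then
`{lm(q_1), ..., lm(q_n)}` is the `≺`-minimal monomial interpolating basis for `Δ`. -/
theorem mainTheorem_severalPoints {F : Type*} [Field F] [CharZero F] {d m n : ℕ}
    (prec : (Fin d →₀ ℕ) → (Fin d →₀ ℕ) → Prop) (hord : IsMonomialOrder prec)
    (θ : Fin m → (Fin d → F)) (hθ : Function.Injective θ)
    (s : Fin m → ℕ) (P : (i : Fin m) → Fin (s i) → MvPolynomial (Fin d) F)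
    (hP : ∀ i, LinearIndependent F (P i))
    (e : Fin n ≃ (i : Fin m) × Fin (s i))
    (q : Fin n → MvPowerSeries (Fin d) F)
    (hq_li : LinearIndependent F q)
    (hq_span : Submodule.span F (Set.range q) =
      Submodule.span F (Set.range fun p : (i : Fin m) × Fin (s i) =>
        expThetaX (θ p.1) * ((P p.1 p.2 : MvPolynomial (Fin d) F) : MvPowerSeries (Fin d) F)))
    (hq_rev : ∀ k l : Fin n, k < l → ∀ mon : Fin d →₀ ℕ,
      IsLeastMonPS prec (q k) mon → MvPowerSeries.coeff mon (q l) = 0)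
    (β : Fin n → (Fin d →₀ ℕ)) (hβ : ∀ k, IsLeastMonPS prec (q k) (β k)) :
    IsMonIntBasisSet
        (fun k => ((MvPolynomial.aeval (θ (e k).1)).toLinearMap ∘ₗ PD (P (e k).1 (e k).2) :
          MvPolynomial (Fin d) F →ₗ[F] F))
        (Finset.image β Finset.univ) ∧
      ∀ T' : Finset (Fin d →₀ ℕ),
        IsMonIntBasisSet
          (fun k => ((MvPolynomial.aeval (θ (e k).1)).toLinearMap ∘ₗ PD (P (e k).1 (e k).2) :
            MvPolynomial (Fin d) F →ₗ[F] F)) T' →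
        ¬ SetPrec prec T' (Finset.image β Finset.univ) :=
  mainTheorem_severalPoints_general prec hord θ s P e q hq_li hq_span hq_rev β hβ
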